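/- (Soundness under separable measurements) In the setting of the soundness identity, replace the shared-randomness product POVMs by a single POVM {Ξ_{i_1…i_n}} on ⊗_{j=1}^n (ℂ^{d_j}⊗ℂ^{d_j}) whose every element is separable across the n pairs, i.e., Ξ_{i_1…i_n} = Σ_r ⊗_{j=1}^n M^{(j)}_{r; i_1…i_n} with each M^{(j)}_{r; i_1…i_n} a positive semidefinite matrix on ℂ^{d_j}⊗ℂ^{d_j} (the pair A'_j⊗A_j). If W satisfies tr(W σ) ≥ 0 for every fully separable density matrix σ on ⊗_j ℂ^{d_j}, and ρ is fully separable, then Σ_{i,k} β^{i}_{k} · tr[Ξ_{i_1…i_n} · (ρ on the A parts, ⊗_j ω^{(j)}_{k_j} on the A' parts)] ≥ 0. -/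

import Mathlib

open Matrix BigOperators
open scoped ComplexOrder Kronecker

noncomputable section

/-- A density matrix: positive semidefinite with trace one. -/
def IsDensity {ι : Type*} [Fintype ι] (ρ : Matrix ι ι ℂ) : Prop :=
  ρ.PosSemidef ∧ ρ.trace = 1

/-- Kronecker (tensor) product of a finite family of matrices. -/
def famKron {J : Type*} [Fintype J] {ι κ : J → Type*}
    (M : ∀ j, Matrix (ι j) (κ j) ℂ) : Matrix (∀ j, ι j) (∀ j, κ j) ℂ :=
  fun a b => ∏ j, M j (a j) (b j)

/-- The maximally entangled state `Φ₊ = (1/d) Σ_{j,k} |jj⟩⟨kk|` on `ℂ^d ⊗ ℂ^d`. -/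
def maxEnt (d : ℕ) : Matrix (Fin d × Fin d) (Fin d × Fin d) ℂ :=
  fun p q => if p.1 = p.2 ∧ q.1 = q.2 then (d : ℂ)⁻¹ else 0

/-- The generalized Bell projector `(I ⊗ U) Φ₊ (I ⊗ U)†`, acting on the pair
(ancilla A', party A), ancilla first. -/
def bellProj {d : ℕ} (U : Matrix (Fin d) (Fin d) ℂ) :
    Matrix (Fin d × Fin d) (Fin d × Fin d) ℂ :=
  ((1 : Matrix (Fin d) (Fin d) ℂ) ⊗ₖ U) * maxEnt d *
    ((1 : Matrix (Fin d) (Fin d) ℂ) ⊗ₖ U)ᴴ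

/-- The state on `⊗_j (A'_j ⊗ A_j)` obtained by placing `ρ` on the `A` parts (second
components) and `⊗_j ω_j` on the ancilla `A'` parts (first components). -/
def assemble {n : ℕ} {d : Fin n → ℕ}
    (ρ : Matrix (∀ j, Fin (d j)) (∀ j, Fin (d j)) ℂ)
    (ω : ∀ j, Matrix (Fin (d j)) (Fin (d j)) ℂ) :
    Matrix (∀ j, Fin (d j) × Fin (d j)) (∀ j, Fin (d j) × Fin (d j)) ℂ :=
  fun p q => (∏ j, ω j (p j).1 (q j).1) * ρ (fun j => (p j).2) (fun j => (q j).2)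

/-- Partial trace over all the `A` parts (the second components of the pairs). -/
def ptraceA {n : ℕ} {d : Fin n → ℕ}
    (M : Matrix (∀ j, Fin (d j) × Fin (d j)) (∀ j, Fin (d j) × Fin (d j)) ℂ) :
    Matrix (∀ j, Fin (d j)) (∀ j, Fin (d j)) ℂ :=
  fun a' b' => ∑ a : ∀ j, Fin (d j), M (fun j => (a' j, a j)) (fun j => (b' j, a j))

/-- `N_{μ;i}`: the matrix on the ancilla (`A'`) parts obtained by partially tracing out
all `A` parts of `(⊗_j Ξ_{μ,i_j}) · (ρ on A, identity on A')`. -/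
def NEve {n M : ℕ} {d : Fin n → ℕ}
    (Ξ : Fin M → ∀ j, Fin ((d j) ^ 2) →
      Matrix (Fin (d j) × Fin (d j)) (Fin (d j) × Fin (d j)) ℂ)
    (ρ : Matrix (∀ j, Fin (d j)) (∀ j, Fin (d j)) ℂ)
    (μ : Fin M) (i : ∀ j, Fin ((d j) ^ 2)) :
    Matrix (∀ j, Fin (d j)) (∀ j, Fin (d j)) ℂ :=
  ptraceA (famKron (fun j => Ξ μ j (i j)) *
    assemble ρ (fun j => (1 : Matrix (Fin (d j)) (Fin (d j)) ℂ)))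

/-- The effective state
`ς = Σ_μ π(μ) Σ_i (⊗_j U_{i_j}^*) N_{μ;i} (⊗_j U_{i_j}ᵀ)` produced by Eve. -/
def sigmaEve {n M : ℕ} {d : Fin n → ℕ} (π : Fin M → ℝ)
    (Ξ : Fin M → ∀ j, Fin ((d j) ^ 2) →
      Matrix (Fin (d j) × Fin (d j)) (Fin (d j) × Fin (d j)) ℂ)
    (U : ∀ j, Fin ((d j) ^ 2) → Matrix (Fin (d j)) (Fin (d j)) ℂ)
    (ρ : Matrix (∀ j, Fin (d j)) (∀ j, Fin (d j)) ℂ) :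
    Matrix (∀ j, Fin (d j)) (∀ j, Fin (d j)) ℂ :=
  ∑ μ, (π μ : ℂ) • ∑ i : ∀ j, Fin ((d j) ^ 2),
    famKron (fun j => ((U j (i j))ᵀ)ᴴ) * NEve Ξ ρ μ i *
      famKron (fun j => (U j (i j))ᵀ)

/-- Full separability of an `n`-partite state. -/
def FullySeparable {n : ℕ} {d : Fin n → ℕ}
    (ρ : Matrix (∀ j, Fin (d j)) (∀ j, Fin (d j)) ℂ) : Prop :=
  ∃ (M : ℕ) (w : Fin M → ℝ)
    (σ : Fin M → ∀ j, Matrix (Fin (d j)) (Fin (d j)) ℂ),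
    (∀ m, 0 ≤ w m) ∧ (∑ m, w m = 1) ∧
    (∀ m j, IsDensity (σ m j)) ∧
    ρ = ∑ m, (w m : ℂ) • famKron (σ m)

/-!
Expand `ρ = Σ_m w_m ⊗_j σ_{m,j}` and `Ξ_i = Σ_r ⊗_j M_{i,r,j}`: every term of the value
factorises over the sites. At site `j` the functional `τ ↦ tr[M (τᵀ ⊗ σ)]` is represented by
the positive semidefinite matrix `N = Tr_A[M (1 ⊗ σ)]`, and since `U` is unitary,
`tr[M (τᵀ ⊗ σ)] = tr[(U τ U†)(U Nᵀ U†)]`. Summing over `k` against the decomposition of `W`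
therefore turns the value into `Σ_{i,r,m} w_m tr[W (⊗_j s_{i,r,m,j})]` with every `s`
positive semidefinite, and `W` is nonnegative on such products because they are nonnegative
multiples of fully separable states.
-/

section PartialTrace

variable {α β : Type*} [Fintype α] [Fintype β]

def partialTraceRight (M : Matrix (α × β) (α × β) ℂ) : Matrix α α ℂ :=
  of fun a b => ∑ c, M (a, c) (b, c)

theorem trace_mul_kronecker_one [DecidableEq β] (X : Matrix (α × β) (α × β) ℂ)
    (ω : Matrix α α ℂ) : (X * (ω ⊗ₖ 1)).trace = (partialTraceRight X * ω).trace := by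
  simp only [trace, diag, mul_apply, kroneckerMap_apply, partialTraceRight, of_apply, one_apply,
    Fintype.sum_prod_type, mul_ite, mul_one, mul_zero, Finset.sum_ite_eq', Finset.mem_univ,
    if_true, Finset.sum_mul]
  refine Finset.sum_congr rfl fun a _ => ?_
  rw [Finset.sum_comm]

theorem trace_mul_kronecker [DecidableEq α] [DecidableEq β] (M : Matrix (α × β) (α × β) ℂ)
    (ω : Matrix α α ℂ) (σ : Matrix β β ℂ) :
    (M * (ω ⊗ₖ σ)).trace = (partialTraceRight (M * (1 ⊗ₖ σ)) * ω).trace := by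
  rw [← trace_mul_kronecker_one, Matrix.mul_assoc, ← mul_kronecker_mul, Matrix.one_mul,
    Matrix.mul_one]

theorem partialTraceRight_mul_one_kronecker [DecidableEq α] (X : Matrix (α × β) (α × β) ℂ)
    (Y : Matrix β β ℂ) :
    partialTraceRight (X * (1 ⊗ₖ Y)) = partialTraceRight ((1 ⊗ₖ Y) * X) := by
  ext a b
  simp only [partialTraceRight, of_apply, mul_apply, kroneckerMap_apply, one_apply, ite_mul,
    one_mul, zero_mul, mul_ite, mul_zero, Fintype.sum_prod_type, Finset.sum_ite_irrel,
    Finset.sum_const_zero, Finset.sum_ite_eq, Finset.sum_ite_eq', Finset.mem_univ, if_true]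
  rw [Finset.sum_comm]
  exact Finset.sum_congr rfl fun _ _ => Finset.sum_congr rfl fun _ _ => mul_comm _ _

theorem posSemidef_partialTraceRight {M : Matrix (α × β) (α × β) ℂ} (hM : M.PosSemidef) :
    (partialTraceRight M).PosSemidef := by
  classical
  let K : β → Matrix (α × β) α ℂ := fun c => of fun p a => if p = (a, c) then 1 else 0
  have hK : partialTraceRight M = ∑ c, (K c)ᴴ * M * K c := by
    ext a b
    simp [K, partialTraceRight, Matrix.sum_apply, mul_apply]
  rw [hK]
  exact posSemidef_sum _ fun c _ => hM.conjTranspose_mul_mul_same (K c)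

theorem posSemidef_partialTraceRight_mul_one_kronecker [DecidableEq α]
    {M : Matrix (α × β) (α × β) ℂ} {σ : Matrix β β ℂ} (hM : M.PosSemidef) (hσ : σ.PosSemidef) :
    (partialTraceRight (M * (1 ⊗ₖ σ))).PosSemidef := by
  obtain ⟨B, rfl⟩ : ∃ B : Matrix β β ℂ, σ = Bᴴ * B := by
    classical
    open scoped MatrixOrder in exact CStarAlgebra.nonneg_iff_eq_star_mul_self.mp hσ.nonneg
  have hfactor : (1 : Matrix α α ℂ) ⊗ₖ (Bᴴ * B) = (1 ⊗ₖ B)ᴴ * (1 ⊗ₖ B) := by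
    rw [conjTranspose_kronecker, conjTranspose_one, ← mul_kronecker_mul, Matrix.one_mul]
  rw [hfactor, ← Matrix.mul_assoc, partialTraceRight_mul_one_kronecker, ← Matrix.mul_assoc]
  exact posSemidef_partialTraceRight (hM.mul_mul_conjTranspose_same _)

theorem trace_conj_mul_conj [DecidableEq α] {U : Matrix α α ℂ} (hU : Uᴴ * U = 1)
    (A B : Matrix α α ℂ) : (U * A * Uᴴ * (U * B * Uᴴ)).trace = (A * B).trace := by
  rw [show U * A * Uᴴ * (U * B * Uᴴ) = U * (A * B) * Uᴴ by
      simp only [Matrix.mul_assoc, ← Matrix.mul_assoc Uᴴ U, hU, Matrix.one_mul],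
    trace_mul_cycle, ← Matrix.mul_assoc, hU, Matrix.one_mul]

theorem trace_mul_transpose_kronecker_eq_trace_conj [DecidableEq α] [DecidableEq β]
    {U : Matrix α α ℂ} (hU : Uᴴ * U = 1) (M : Matrix (α × β) (α × β) ℂ) (τ : Matrix α α ℂ)
    (σ : Matrix β β ℂ) :
    (M * (τᵀ ⊗ₖ σ)).trace =
      (U * τ * Uᴴ * (U * (partialTraceRight (M * (1 ⊗ₖ σ)))ᵀ * Uᴴ)).trace := by
  rw [trace_conj_mul_conj hU, trace_mul_kronecker, ← trace_transpose, transpose_mul,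
    transpose_transpose]

end PartialTrace

section FamKron

variable {J : Type*} [Fintype J] {ι : J → Type*}

theorem famKron_smul (c : J → ℂ) (A : ∀ j, Matrix (ι j) (ι j) ℂ) :
    famKron (fun j => c j • A j) = (∏ j, c j) • famKron A := by
  ext p q
  simp [famKron, Finset.prod_mul_distrib]

variable [DecidableEq J] [∀ j, Fintype (ι j)]

theorem famKron_mul (A B : ∀ j, Matrix (ι j) (ι j) ℂ) :
    famKron A * famKron B = famKron (fun j => A j * B j) := by
  ext p q
  simp only [mul_apply, famKron, ← Finset.prod_mul_distrib]
  exact (Fintype.prod_sum fun j x => A j (p j) x * B j x (q j)).symm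

theorem trace_famKron (A : ∀ j, Matrix (ι j) (ι j) ℂ) :
    (famKron A).trace = ∏ j, (A j).trace :=
  (Fintype.prod_sum fun j x => A j x x).symm

theorem trace_famKron_mul_famKron (A B : ∀ j, Matrix (ι j) (ι j) ℂ) :
    (famKron A * famKron B).trace = ∏ j, (A j * B j).trace := by
  rw [famKron_mul, trace_famKron]

end FamKron

section Separable

variable {n : ℕ} {d : Fin n → ℕ}

theorem fullySeparable_famKron {σ : ∀ j, Matrix (Fin (d j)) (Fin (d j)) ℂ}
    (hσ : ∀ j, IsDensity (σ j)) : FullySeparable (famKron σ) :=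
  ⟨1, fun _ => 1, fun _ => σ, fun _ => zero_le_one, by simp, fun _ => hσ, by simp⟩

theorem trace_mul_famKron_nonneg {W : Matrix (∀ j, Fin (d j)) (∀ j, Fin (d j)) ℂ}
    (hW : ∀ σ, FullySeparable σ → 0 ≤ (W * σ).trace)
    {s : ∀ j, Matrix (Fin (d j)) (Fin (d j)) ℂ} (hs : ∀ j, (s j).PosSemidef) :
    0 ≤ (W * famKron s).trace := by
  by_cases hzero : ∃ j, (s j).trace = 0
  · obtain ⟨j₀, hj₀⟩ := hzero
    have hs₀ : famKron s = 0 := by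
      ext p q
      exact Finset.prod_eq_zero (Finset.mem_univ j₀) (by simp [(hs j₀).trace_eq_zero_iff.mp hj₀])
    simp [hs₀]
  push Not at hzero
  have hdensity : ∀ j, IsDensity ((s j).trace⁻¹ • s j) := fun j =>
    ⟨(hs j).smul (inv_nonneg.mpr (hs j).trace_nonneg), by
      rw [trace_smul, smul_eq_mul, inv_mul_cancel₀ (hzero j)]⟩
  have hnormalize : famKron s = (∏ j, (s j).trace) • famKron fun j => (s j).trace⁻¹ • s j := by
    rw [← famKron_smul]
    congr 1
    funext j
    rw [smul_smul, mul_inv_cancel₀ (hzero j), one_smul]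
  rw [hnormalize, Matrix.mul_smul, trace_smul, smul_eq_mul]
  exact mul_nonneg (Finset.prod_nonneg fun j _ => (hs j).trace_nonneg)
    (hW _ (fullySeparable_famKron hdensity))

theorem assemble_sum_smul_famKron {M : ℕ} (w : Fin M → ℂ)
    (σ : Fin M → ∀ j, Matrix (Fin (d j)) (Fin (d j)) ℂ)
    (ω : ∀ j, Matrix (Fin (d j)) (Fin (d j)) ℂ) :
    assemble (∑ m, w m • famKron (σ m)) ω = ∑ m, w m • famKron (fun j => ω j ⊗ₖ σ m j) := by
  ext p q
  simp only [assemble, Matrix.sum_apply, Matrix.smul_apply, famKron, smul_eq_mul,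
    kroneckerMap_apply, Finset.prod_mul_distrib, Finset.mul_sum]
  exact Finset.sum_congr rfl fun m _ => by ring

theorem trace_sum_famKron_mul_assemble {R M : ℕ} (E : Fin R → ∀ j,
      Matrix (Fin (d j) × Fin (d j)) (Fin (d j) × Fin (d j)) ℂ)
    (w : Fin M → ℂ) (σ : Fin M → ∀ j, Matrix (Fin (d j)) (Fin (d j)) ℂ)
    {V : ∀ j, Matrix (Fin (d j)) (Fin (d j)) ℂ} (hV : ∀ j, (V j)ᴴ * V j = 1)
    (τ : ∀ j, Matrix (Fin (d j)) (Fin (d j)) ℂ) :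
    ((∑ r, famKron (E r)) * assemble (∑ m, w m • famKron (σ m)) fun j => (τ j)ᵀ).trace =
      ∑ m, w m * ∑ r, (famKron (fun j => V j * τ j * (V j)ᴴ) *
        famKron fun j => V j * (partialTraceRight (E r j * (1 ⊗ₖ σ m j)))ᵀ * (V j)ᴴ).trace := by
  simp only [assemble_sum_smul_famKron, Matrix.sum_mul, Matrix.mul_smul, trace_sum, trace_smul,
    smul_eq_mul, trace_famKron_mul_famKron, Finset.mul_sum,
    ← trace_mul_transpose_kronecker_eq_trace_conj (hV _)]

end Separable

theorem mdi_soundness_separable_measurements_general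
    {n : ℕ} (d : Fin n → ℕ)
    (U : ∀ j, Fin ((d j) ^ 2) → Matrix (Fin (d j)) (Fin (d j)) ℂ)
    (hU : ∀ j i, (U j i)ᴴ * U j i = 1)
    (ρ : Matrix (∀ j, Fin (d j)) (∀ j, Fin (d j)) ℂ)
    (hρsep : FullySeparable ρ)
    (W : Matrix (∀ j, Fin (d j)) (∀ j, Fin (d j)) ℂ)
    (hWitness : ∀ σ : Matrix (∀ j, Fin (d j)) (∀ j, Fin (d j)) ℂ,
      FullySeparable σ → 0 ≤ (W * σ).trace)
    (τ : ∀ j, Fin ((d j) ^ 2) → Matrix (Fin (d j)) (Fin (d j)) ℂ)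
    (β : (∀ j, Fin ((d j) ^ 2)) → (∀ j, Fin ((d j) ^ 2)) → ℝ)
    (hdecomp : ∀ i, W = ∑ k : ∀ j, Fin ((d j) ^ 2),
      (β i k : ℂ) • famKron (fun j => U j (i j) * τ j (k j) * (U j (i j))ᴴ))
    (Ξ : (∀ j, Fin ((d j) ^ 2)) →
      Matrix (∀ j, Fin (d j) × Fin (d j)) (∀ j, Fin (d j) × Fin (d j)) ℂ)
    (R : (∀ j, Fin ((d j) ^ 2)) → ℕ)
    (Mel : ∀ i, Fin (R i) → ∀ j,
      Matrix (Fin (d j) × Fin (d j)) (Fin (d j) × Fin (d j)) ℂ)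
    (hMel : ∀ i r j, (Mel i r j).PosSemidef)
    (hΞ : ∀ i, Ξ i = ∑ r, famKron (fun j => Mel i r j)) :
    0 ≤ ∑ i : ∀ j, Fin ((d j) ^ 2), ∑ k : ∀ j, Fin ((d j) ^ 2),
      (β i k : ℂ) *
        (Ξ i * assemble ρ (fun j => (τ j (k j))ᵀ)).trace := by
  obtain ⟨N, w, σ, hw, -, hσ, rfl⟩ := hρsep
  set s : ∀ i, Fin (R i) → Fin N → ∀ j, Matrix (Fin (d j)) (Fin (d j)) ℂ :=
    fun i r m j => U j (i j) * (partialTraceRight (Mel i r j * (1 ⊗ₖ σ m j)))ᵀ * (U j (i j))ᴴ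
  set T : (∀ j, Fin ((d j) ^ 2)) → (∀ j, Fin ((d j) ^ 2)) →
      ∀ j, Matrix (Fin (d j)) (Fin (d j)) ℂ := fun i k j => U j (i j) * τ j (k j) * (U j (i j))ᴴ
  have hmeasure : ∀ i k, (Ξ i * assemble (∑ m, (w m : ℂ) • famKron (σ m))
      (fun j => (τ j (k j))ᵀ)).trace =
        ∑ m, (w m : ℂ) * ∑ r, (famKron (T i k) * famKron (s i r m)).trace := fun i k => by
    rw [hΞ i]
    exact trace_sum_famKron_mul_assemble _ _ _ (fun j => hU j (i j)) _
  have hwitness : ∀ i r m, (W * famKron (s i r m)).trace =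
      ∑ k, (β i k : ℂ) * (famKron (T i k) * famKron (s i r m)).trace := fun i r m => by
    rw [hdecomp i]
    simp only [Matrix.sum_mul, Matrix.smul_mul, trace_sum, trace_smul, smul_eq_mul]
    rfl
  calc (0 : ℂ) ≤ ∑ i, ∑ r, ∑ m, (w m : ℂ) * (W * famKron (s i r m)).trace :=
        Finset.sum_nonneg fun i _ => Finset.sum_nonneg fun r _ => Finset.sum_nonneg fun m _ =>
          mul_nonneg (by exact_mod_cast hw m) <| trace_mul_famKron_nonneg hWitness fun j =>
            (posSemidef_partialTraceRight_mul_one_kronecker (hMel i r j) (hσ m j).1).transpose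
              |>.mul_mul_conjTranspose_same _
    _ = _ := by
        refine Finset.sum_congr rfl fun i _ => ?_
        simp only [hmeasure, hwitness, Finset.mul_sum, mul_left_comm (β i _ : ℂ)]
        rw [Finset.sum_comm]
        exact (Finset.sum_congr rfl fun m _ => Finset.sum_comm).trans Finset.sum_comm

/-- Soundness under separable measurements: with a single POVM `{Ξ_i}` on
`⊗_j (ℂ^{d_j} ⊗ ℂ^{d_j})` whose every element is separable across the `n` pairs,
the MDI value is nonnegative for every fully separable `ρ`, provided `W` is an
entanglement witness. -/
theorem mdi_soundness_separable_measurements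
    {n : ℕ} (d : Fin n → ℕ)
    (U : ∀ j, Fin ((d j) ^ 2) → Matrix (Fin (d j)) (Fin (d j)) ℂ)
    (hU : ∀ j i, (U j i)ᴴ * U j i = 1)
    (horth : ∀ j i i', ((U j i)ᴴ * U j i').trace = if i = i' then (d j : ℂ) else 0)
    (ρ : Matrix (∀ j, Fin (d j)) (∀ j, Fin (d j)) ℂ) (hρ : IsDensity ρ)
    (hρsep : FullySeparable ρ)
    (W : Matrix (∀ j, Fin (d j)) (∀ j, Fin (d j)) ℂ) (hW : W.IsHermitian)
    (hWitness : ∀ σ : Matrix (∀ j, Fin (d j)) (∀ j, Fin (d j)) ℂ,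
      FullySeparable σ → 0 ≤ (W * σ).trace)
    (τ : ∀ j, Fin ((d j) ^ 2) → Matrix (Fin (d j)) (Fin (d j)) ℂ)
    (hτ : ∀ j k, IsDensity (τ j k))
    (β : (∀ j, Fin ((d j) ^ 2)) → (∀ j, Fin ((d j) ^ 2)) → ℝ)
    (hdecomp : ∀ i, W = ∑ k : ∀ j, Fin ((d j) ^ 2),
      (β i k : ℂ) • famKron (fun j => U j (i j) * τ j (k j) * (U j (i j))ᴴ))
    (Ξ : (∀ j, Fin ((d j) ^ 2)) →
      Matrix (∀ j, Fin (d j) × Fin (d j)) (∀ j, Fin (d j) × Fin (d j)) ℂ)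
    (R : (∀ j, Fin ((d j) ^ 2)) → ℕ)
    (Mel : ∀ i, Fin (R i) → ∀ j,
      Matrix (Fin (d j) × Fin (d j)) (Fin (d j) × Fin (d j)) ℂ)
    (hMel : ∀ i r j, (Mel i r j).PosSemidef)
    (hΞ : ∀ i, Ξ i = ∑ r, famKron (fun j => Mel i r j))
    (hΞsum : ∑ i, Ξ i = 1) :
    0 ≤ ∑ i : ∀ j, Fin ((d j) ^ 2), ∑ k : ∀ j, Fin ((d j) ^ 2),
      (β i k : ℂ) *
        (Ξ i * assemble ρ (fun j => (τ j (k j))ᵀ)).trace :=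
  mdi_soundness_separable_measurements_general d U hU ρ hρsep W hWitness τ β hdecomp Ξ R Mel hMel hΞ
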